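/- Let γ > kn and λ > 2n(γ+k+1). If ℓ, ℓ' ∈ ℤ with ℓ ≠ ℓ', and there exist integers 1 ≤ a, a' ≤ n and 1 ≤ j < j' ≤ k such that (|ℓ−ℓ'| = a(γ+j+1) or |ℓ−ℓ'| = λ − a(γ+j+1)) and (|ℓ−ℓ'| = a'(γ+j'+1) or |ℓ−ℓ'| = λ − a'(γ+j'+1)), then a contradiction follows; i.e., no such a, a' exist. -/
import Mathlib

theorem noSquareCorners (n k γ lam ℓ ℓ' a a' j j' : ℤ)
    (hn : 0 < n) (hk : 0 < k) (hγ : 0 < γ) (hlam : 0 < lam)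
    (hγn : k * n < γ) (hlam2 : 2 * n * (γ + k + 1) < lam)
    (hne : ℓ ≠ ℓ')
    (ha1 : 1 ≤ a) (ha2 : a ≤ n) (ha'1 : 1 ≤ a') (ha'2 : a' ≤ n)
    (hj1 : 1 ≤ j) (hjj' : j < j') (hj'2 : j' ≤ k)
    (h1 : |ℓ - ℓ'| = a * (γ + j + 1) ∨ |ℓ - ℓ'| = lam - a * (γ + j + 1))
    (h2 : |ℓ - ℓ'| = a' * (γ + j' + 1) ∨ |ℓ - ℓ'| = lam - a' * (γ + j' + 1)) :
    False := by
  have hje : 1 ≤ j' - j := by omega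
  have key : ∀ b b' : ℤ, 1 ≤ b → b ≤ n → 1 ≤ b' → b' ≤ n →
      b * (γ + j + 1) = b' * (γ + j' + 1) → False := by
    intro b b' hb1 hb2 hb'1 hb'2 he
    rcases lt_trichotomy b b' with h | h | h
    · nlinarith [mul_le_mul hb'2 hj'2 (by omega : (0:ℤ) ≤ j') (by omega : (0:ℤ) ≤ n)]
    · subst h; nlinarith
    · nlinarith [mul_le_mul hb'2 hj'2 (by omega : (0:ℤ) ≤ j') (by omega : (0:ℤ) ≤ n),
        mul_le_mul hb2 (le_of_lt hjj') (by omega : (0:ℤ) ≤ j) (by omega : (0:ℤ) ≤ n)]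
  have hsum : a * (γ + j + 1) + a' * (γ + j' + 1) < lam := by
    nlinarith
  rcases h1 with h1 | h1 <;> rcases h2 with h2 | h2
  · exact key a a' ha1 ha2 ha'1 ha'2 (h1 ▸ h2 ▸ rfl)
  · omega
  · omega
  · apply key a a' ha1 ha2 ha'1 ha'2; omega
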